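/- Let Y be a mean zero random variable with variance σ² ∈ (0,∞), and let Y* be defined on the same probability space and have the Y-zero biased distribution. Suppose |Y* − Y| ≤ c almost surely for some constant c > 0, and that the moment generating function m(s) = E[exp(sY)] is finite for all s ∈ [0, 2/c). Then for all t ≥ 0, P(Y ≥ t) ≤ exp(−t² / (10σ²/3 + ct)). -/

import Mathlib

open MeasureTheory ProbabilityTheory Real

/-- `Ystar` has the `Y`-zero biased distribution with respect to variance `σ2`:
`E[Y f(Y)] = σ2 * E[f'(Ystar)]` for every (absolutely continuous) differentiable
function `f` with derivative `f'` for which both expectations exist. -/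
def ZeroBiased {Ω : Type*} [MeasurableSpace Ω] (μ : Measure Ω)
    (Y Ystar : Ω → ℝ) (σ2 : ℝ) : Prop :=
  ∀ f f' : ℝ → ℝ, (∀ x, HasDerivAt f (f' x) x) →
    Integrable (fun ω => Y ω * f (Y ω)) μ →
    Integrable (fun ω => f' (Ystar ω)) μ →
    ∫ ω, Y ω * f (Y ω) ∂μ = σ2 * ∫ ω, f' (Ystar ω) ∂μ

/-!
For `0 < s < b`, the zero-bias identity with `f(y) = exp (s * y)` gives
`m'(s) = E[Y exp (s Y)] = σ² s E[exp (s Y*)] ≤ σ² s exp (s c) m(s)`, because `Y* ≤ Y + c`.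
Integrating `(log m)'` over `[0, b]` bounds the cumulant generating function by
`σ² exp (b c) b² / 2`. The Chernoff bound at `b = 2t / D`, `D = 10σ²/3 + ct`, then gives the tail
bound, since `(2 - x) exp x ≤ e < 10/3` at `x = b c` is exactly `2σ² exp (b c) ≤ D`.
-/

lemma log_le_log_add_of_hasDerivAt_le_mul {f f' : ℝ → ℝ} {K b : ℝ} (hb : 0 ≤ b)
    (hpos : ∀ s ∈ Set.Icc 0 b, 0 < f s) (hcont : ContinuousOn f (Set.Icc 0 b))
    (hderiv : ∀ s ∈ Set.Ioo 0 b, HasDerivAt f (f' s) s)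
    (hle : ∀ s ∈ Set.Ioo 0 b, f' s ≤ K * s * f s) :
    log (f b) ≤ log (f 0) + K * b ^ 2 / 2 := by
  have hmono : MonotoneOn (fun u => K * u ^ 2 / 2 - log (f u)) (Set.Icc 0 b) := by
    refine monotoneOn_of_hasDerivWithinAt_nonneg (f' := fun s => K * s - f' s / f s)
      (convex_Icc 0 b) ((by fun_prop : Continuous fun u : ℝ => K * u ^ 2 / 2).continuousOn.sub
        (hcont.log fun s hs => (hpos s hs).ne')) (fun s hs => ?_) (fun s hs => ?_)
    all_goals
      rw [interior_Icc] at hs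
      have hfs := hpos s (Set.Ioo_subset_Icc_self hs)
    · have hpoly : HasDerivAt (fun u : ℝ => K * u ^ 2 / 2) (K * s) s :=
        (((hasDerivAt_pow 2 s).const_mul K).div_const 2).congr_deriv (by push_cast; ring)
      exact (hpoly.sub ((hderiv s hs).log hfs.ne')).hasDerivWithinAt
    · rw [sub_nonneg, div_le_iff₀ hfs]
      exact hle s hs
  have := hmono ⟨le_rfl, hb⟩ ⟨hb, le_rfl⟩ hb
  norm_num at this
  linarith

section MGF

variable {Ω : Type*} [MeasurableSpace Ω] {μ : Measure Ω} {X X' : Ω → ℝ}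

lemma continuousOn_mgf_Icc {a b : ℝ} (ha : Integrable (fun ω => exp (a * X ω)) μ)
    (hb : Integrable (fun ω => exp (b * X ω)) μ) : ContinuousOn (mgf X μ) (Set.Icc a b) := by
  refine continuousOn_of_dominated (bound := fun ω => exp (a * X ω) + exp (b * X ω))
    (fun u hu => (integrable_exp_mul_of_le_of_le ha hb hu.1 hu.2).aestronglyMeasurable)
    (fun u hu => ae_of_all _ fun ω => ?_) (ha.add hb) (ae_of_all _ fun ω => by fun_prop)
  rw [norm_of_nonneg (exp_pos _).le]
  rcases le_total 0 (X ω) with hX | hX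
  · linarith [exp_le_exp.2 (mul_le_mul_of_nonneg_right hu.2 hX), exp_pos (a * X ω)]
  · linarith [exp_le_exp.2 (mul_le_mul_of_nonpos_right hu.1 hX), exp_pos (b * X ω)]

lemma ae_exp_mul_le_of_ae_le_add {c t : ℝ} (hle : ∀ᵐ ω ∂μ, X' ω ≤ X ω + c) (ht : 0 ≤ t) :
    ∀ᵐ ω ∂μ, exp (t * X' ω) ≤ exp (t * c) * exp (t * X ω) := by
  filter_upwards [hle] with ω hω
  rw [← exp_add]
  exact exp_le_exp.2 (by nlinarith)

lemma integrable_exp_mul_of_ae_le_add {c t : ℝ} (hX' : AEMeasurable X' μ)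
    (hle : ∀ᵐ ω ∂μ, X' ω ≤ X ω + c) (ht : 0 ≤ t)
    (hX : Integrable (fun ω => exp (t * X ω)) μ) :
    Integrable (fun ω => exp (t * X' ω)) μ := by
  refine (hX.const_mul (exp (t * c))).mono' (hX'.const_mul t).exp.aestronglyMeasurable ?_
  filter_upwards [ae_exp_mul_le_of_ae_le_add hle ht] with ω hω
  rwa [norm_of_nonneg (exp_pos _).le]

lemma mgf_le_exp_mul_mgf_of_ae_le_add {c t : ℝ} (hle : ∀ᵐ ω ∂μ, X' ω ≤ X ω + c) (ht : 0 ≤ t)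
    (hX : Integrable (fun ω => exp (t * X ω)) μ) : mgf X' μ t ≤ exp (t * c) * mgf X μ t := by
  rw [mgf, mgf, ← integral_const_mul]
  exact integral_mono_of_nonneg (ae_of_all _ fun ω => (exp_pos _).le) (hX.const_mul _)
    (ae_exp_mul_le_of_ae_le_add hle ht)

end MGF

section ZeroBias

variable {Ω : Type*} [MeasurableSpace Ω] {μ : Measure Ω} {Y Ystar : Ω → ℝ} {σ2 : ℝ}

lemma ZeroBiased.integral_mul_exp_mul (hzb : ZeroBiased μ Y Ystar σ2) {s : ℝ}
    (hY : Integrable (fun ω => Y ω * exp (s * Y ω)) μ)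
    (hYstar : Integrable (fun ω => exp (s * Ystar ω)) μ) :
    ∫ ω, Y ω * exp (s * Y ω) ∂μ = σ2 * s * mgf Ystar μ s := by
  rw [mgf, mul_assoc, ← integral_const_mul]
  refine hzb (fun x => exp (s * x)) (fun x => s * exp (s * x)) (fun x => ?_) hY
    (hYstar.const_mul s)
  simpa [mul_comm] using ((hasDerivAt_id x).const_mul s).exp

theorem ZeroBiased.cgf_le [IsProbabilityMeasure μ] {c b : ℝ} (hzb : ZeroBiased μ Y Ystar σ2)
    (hYstar : AEMeasurable Ystar μ) (hσ2 : 0 ≤ σ2) (hc : 0 ≤ c)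
    (hle : ∀ᵐ ω ∂μ, Ystar ω ≤ Y ω + c) (hb : 0 ≤ b)
    (hint : Integrable (fun ω => exp (b * Y ω)) μ) :
    cgf Y μ b ≤ σ2 * exp (b * c) * b ^ 2 / 2 := by
  have hintIcc : ∀ s ∈ Set.Icc 0 b, Integrable (fun ω => exp (s * Y ω)) μ :=
    fun s hs => integrable_exp_mul_of_nonneg_of_le hint hs.1 hs.2
  have hinterior : Set.Ioo 0 b ⊆ interior (integrableExpSet Y μ) :=
    isOpen_Ioo.subset_interior_iff.2 fun s hs => hintIcc s (Set.Ioo_subset_Icc_self hs)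
  have hderiv_le : ∀ s ∈ Set.Ioo 0 b,
      μ[fun ω => Y ω * exp (s * Y ω)] ≤ σ2 * exp (b * c) * s * mgf Y μ s := by
    intro s hs
    have hs0 : 0 ≤ s := hs.1.le
    have hint_s := hintIcc s (Set.Ioo_subset_Icc_self hs)
    have hmul : Integrable (fun ω => Y ω * exp (s * Y ω)) μ := by
      simpa using integrable_pow_mul_exp_of_mem_interior_integrableExpSet (hinterior hs) 1
    rw [hzb.integral_mul_exp_mul hmul (integrable_exp_mul_of_ae_le_add hYstar hle hs0 hint_s)]
    calc σ2 * s * mgf Ystar μ s ≤ σ2 * s * (exp (s * c) * mgf Y μ s) := by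
          gcongr
          exact mgf_le_exp_mul_mgf_of_ae_le_add hle hs0 hint_s
      _ ≤ σ2 * s * (exp (b * c) * mgf Y μ s) := by
          gcongr
          · exact (mgf_pos hint_s).le
          · exact hs.2.le
      _ = σ2 * exp (b * c) * s * mgf Y μ s := by ring
  simpa [cgf] using log_le_log_add_of_hasDerivAt_le_mul hb (fun s hs => mgf_pos (hintIcc s hs))
    (continuousOn_mgf_Icc (by simp) hint) (fun s hs => hasDerivAt_mgf (hinterior hs)) hderiv_le

end ZeroBias

lemma two_sub_mul_exp_le_exp_one (x : ℝ) : (2 - x) * exp x ≤ exp 1 := by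
  calc (2 - x) * exp x ≤ exp (1 - x) * exp x := by
        gcongr
        linarith [add_one_le_exp (1 - x)]
    _ = exp 1 := by rw [← exp_add, sub_add_cancel]

lemma two_mul_mul_exp_le {σ2 c t : ℝ} (hσ2 : 0 < σ2) (hD : 0 < 10 * σ2 / 3 + c * t) :
    2 * σ2 * exp (2 * t / (10 * σ2 / 3 + c * t) * c) ≤ 10 * σ2 / 3 + c * t := by
  set D := 10 * σ2 / 3 + c * t
  set x := 2 * t / D * c
  have hDx : D * (2 - x) = 20 * σ2 / 3 := by
    have hx : D * x = 2 * t * c := by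
      simp only [x]
      field_simp
    rw [mul_sub, hx]
    simp only [D]
    ring
  have hx : 0 < 2 - x := pos_of_mul_pos_right (hDx ▸ by positivity) hD.le
  refine le_of_mul_le_mul_right ?_ hx
  calc 2 * σ2 * exp x * (2 - x) = 2 * σ2 * ((2 - x) * exp x) := by ring
    _ ≤ 2 * σ2 * (10 / 3) := by
        gcongr
        linarith [two_sub_mul_exp_le_exp_one x, exp_one_lt_d9]
    _ = D * (2 - x) := by rw [hDx]; ring

theorem zero_bias_right_tail_abs
    {Ω : Type*} [MeasurableSpace Ω] (μ : Measure Ω) [IsProbabilityMeasure μ]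
    (Y Ystar : Ω → ℝ) (hYstar : Measurable Ystar)
    (σ2 : ℝ) (hσ2 : 0 < σ2)
    (hzb : ZeroBiased μ Y Ystar σ2)
    (c : ℝ) (hc : 0 < c)
    (hbdd : ∀ᵐ ω ∂μ, |Ystar ω - Y ω| ≤ c)
    (hmgf : ∀ s ∈ Set.Ico (0 : ℝ) (2 / c), Integrable (fun ω => exp (s * Y ω)) μ) :
    ∀ t : ℝ, 0 ≤ t →
      (μ {ω | t ≤ Y ω}).toReal ≤ exp (-(t ^ 2) / (10 * σ2 / 3 + c * t)) := by
  intro t ht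
  set D := 10 * σ2 / 3 + c * t
  have hD : 0 < D := by positivity
  set s := 2 * t / D
  have hs : 0 ≤ s := by positivity
  have hsc : s < 2 / c := by
    rw [lt_div_iff₀ hc, div_mul_eq_mul_div, div_lt_iff₀ hD]
    simp only [D]
    linarith
  have hint := hmgf s ⟨hs, hsc⟩
  have hle : ∀ᵐ ω ∂μ, Ystar ω ≤ Y ω + c :=
    hbdd.mono fun ω h => by linarith [(abs_le.1 h).2]
  have hcgf : cgf Y μ s ≤ D * s ^ 2 / 4 :=
    calc cgf Y μ s ≤ σ2 * exp (s * c) * s ^ 2 / 2 :=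
          hzb.cgf_le hYstar.aemeasurable hσ2.le hc.le hle hs hint
      _ ≤ D * s ^ 2 / 4 := by
          have h : 2 * σ2 * exp (s * c) ≤ D := two_mul_mul_exp_le hσ2 hD
          nlinarith [mul_le_mul_of_nonneg_right h (sq_nonneg s)]
  calc (μ {ω | t ≤ Y ω}).toReal ≤ exp (-s * t + cgf Y μ s) := measure_ge_le_exp_cgf t hs hint
    _ ≤ exp (-s * t + D * s ^ 2 / 4) := by gcongr
    _ = exp (-(t ^ 2) / D) := by
        congr 1
        simp only [s]
        field_simp
        ring
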